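/- arXiv:1610.09945 — 2 statements merged into one kernel-verified Lean document; each statement's English description precedes it below -/
import Mathlib

section
/- With the notation of the previous claim (r_x the piecewise linear map built from the cocycle m_x and the functions i_x, j_x), for every x ∈ 𝐗, t ∈ ℝ, and p ∈ ℤ one has r_x(t + p) = r_{τ^p(x)}(t) + m_x(p). -/
/-- The one-sided shift map on `ℕ → A`. -/
def shift {A : Type*} (x : ℕ → A) : ℕ → A := fun n => x (n + 1)

/-- The one-sided tail `x_{[i,∞)}` of a two-sided sequence. -/
def tail {A : Type*} (x : ℤ → A) (i : ℤ) : ℕ → A := fun m => x (i + m)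

/-- The `i`-th power (for `i : ℤ`) of the two-sided shift `τ`. -/
def tshiftZ {A : Type*} (i : ℤ) (x : ℤ → A) : ℤ → A := fun m => x (m + i)

/-- The two-sided shift space associated to a one-sided shift space `X`. -/
def TwoSided {A : Type*} (X : Set (ℕ → A)) : Set (ℤ → A) :=
  {x | ∀ m : ℤ, tail x m ∈ X}

/-- The partial-sum cocycle `m_x(j)` built from `n : X → ℕ₀` along `x`. -/
def mcoc {A : Type*} (n : (ℕ → A) → ℕ) (x : ℤ → A) (j : ℤ) : ℤ :=
  if 0 ≤ j then ∑ i ∈ Finset.range j.toNat, (n (tail x (i : ℤ)) : ℤ)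
  else -∑ i ∈ Finset.range (-j).toNat, (n (tail x (-(i : ℤ) - 1)) : ℤ)

/-- `i_x(t)`: the largest `i ≤ t` with `n(x_{[i,∞)}) ≠ 0`. -/
noncomputable def ixt {A : Type*} (n : (ℕ → A) → ℕ) (x : ℤ → A) (t : ℝ) : ℤ :=
  sSup {i : ℤ | (i : ℝ) ≤ t ∧ n (tail x i) ≠ 0}

/-- `j_x(t)`: the smallest `j > t` with `n(x_{[j,∞)}) ≠ 0`. -/
noncomputable def jxt {A : Type*} (n : (ℕ → A) → ℕ) (x : ℤ → A) (t : ℝ) : ℤ :=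
  sInf {j : ℤ | t < (j : ℝ) ∧ n (tail x j) ≠ 0}

/-- The piecewise-linear interpolation `r_x : ℝ → ℝ` of the cocycle `m_x`. -/
noncomputable def rfun {A : Type*} (n : (ℕ → A) → ℕ) (x : ℤ → A) (t : ℝ) : ℝ :=
  (mcoc n x (ixt n x t) : ℝ) +
    ((t - (ixt n x t : ℝ)) / ((jxt n x t : ℝ) - (ixt n x t : ℝ))) *
      (n (tail x (ixt n x t)) : ℝ)

/-! Shifting `x` by `p` shifts every tail index by `p`, so the sets whose `sSup`/`sInf` define
`i_x(t + p)` and `j_x(t + p)` are the translates by `p` of those defining `i_{τ^p x}(t)` and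
`j_{τ^p x}(t)`; the cocycle identity for `m_x` then accounts for the constant `m_x(p)`. -/

section

variable {A : Type*}

lemma tail_tshiftZ (x : ℤ → A) (p i : ℤ) : tail (tshiftZ p x) i = tail x (i + p) := by
  funext m
  simp only [tail, tshiftZ]
  congr 1
  ring

lemma tshiftZ_mem_twoSided {X : Set (ℕ → A)} {x : ℤ → A} (hx : x ∈ TwoSided X) (p : ℤ) :
    tshiftZ p x ∈ TwoSided X := fun m => tail_tshiftZ x p m ▸ hx (m + p)

variable (n : (ℕ → A) → ℕ) (x : ℤ → A)

lemma mcoc_add_one (j : ℤ) : mcoc n x (j + 1) = mcoc n x j + n (tail x j) := by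
  rcases le_or_gt 0 j with hj | hj
  · rw [mcoc, mcoc, if_pos (by omega), if_pos hj, show (j + 1).toNat = j.toNat + 1 by omega,
      Finset.sum_range_succ, Int.toNat_of_nonneg hj]
  · obtain ⟨k, rfl⟩ : ∃ k : ℕ, j = -(k : ℤ) - 1 := ⟨(-j - 1).toNat, by omega⟩
    have hneg : mcoc n x (-(k : ℤ) - 1) = mcoc n x (-(k : ℤ)) - n (tail x (-(k : ℤ) - 1)) := by
      rw [mcoc, if_neg (by omega), show (-(-(k : ℤ) - 1)).toNat = k + 1 by omega,
        Finset.sum_range_succ]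
      rcases k.eq_zero_or_pos with rfl | hk
      · simp [mcoc]
      · rw [mcoc, if_neg (by omega), show (-(-(k : ℤ))).toNat = k by omega]
        ring
    rw [hneg, sub_add_cancel, sub_add_cancel]

lemma mcoc_add (p a : ℤ) : mcoc n x (p + a) = mcoc n x p + mcoc n (tshiftZ p x) a := by
  induction a using Int.induction_on with
  | zero => simp [mcoc]
  | succ k ih =>
    rw [← add_assoc, mcoc_add_one, ih, mcoc_add_one, tail_tshiftZ, add_comm (k : ℤ) p]
    ring
  | pred k ih =>
    have h := mcoc_add_one n x (p + (-(k : ℤ) - 1))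
    have h' := mcoc_add_one n (tshiftZ p x) (-(k : ℤ) - 1)
    rw [show p + (-(k : ℤ) - 1) + 1 = p + -(k : ℤ) by ring] at h
    rw [sub_add_cancel, tail_tshiftZ, add_comm _ p] at h'
    omega

variable (t : ℝ) (p : ℤ)

lemma ixt_add_intCast (h : ∃ i : ℤ, (i : ℝ) ≤ t ∧ n (tail (tshiftZ p x) i) ≠ 0) :
    ixt n x (t + p) = ixt n (tshiftZ p x) t + p := by
  have hset : {i : ℤ | (i : ℝ) ≤ t + p ∧ n (tail x i) ≠ 0} =
      OrderIso.addRight p '' {i : ℤ | (i : ℝ) ≤ t ∧ n (tail (tshiftZ p x) i) ≠ 0} := by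
    ext i
    simp [tail_tshiftZ]
  have hbdd : BddAbove {i : ℤ | (i : ℝ) ≤ t ∧ n (tail (tshiftZ p x) i) ≠ 0} :=
    ⟨⌊t⌋, fun i hi => Int.le_floor.2 hi.1⟩
  rw [ixt, ixt, hset]
  exact ((OrderIso.addRight p).map_csSup' h hbdd).symm

lemma jxt_add_intCast (h : ∃ j : ℤ, t < (j : ℝ) ∧ n (tail (tshiftZ p x) j) ≠ 0) :
    jxt n x (t + p) = jxt n (tshiftZ p x) t + p := by
  have hset : {j : ℤ | t + p < (j : ℝ) ∧ n (tail x j) ≠ 0} =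
      OrderIso.addRight p '' {j : ℤ | t < (j : ℝ) ∧ n (tail (tshiftZ p x) j) ≠ 0} := by
    ext j
    simp [tail_tshiftZ]
  have hbdd : BddBelow {j : ℤ | t < (j : ℝ) ∧ n (tail (tshiftZ p x) j) ≠ 0} :=
    ⟨⌊t⌋, fun j hj => (Int.floor_lt.2 hj.1).le⟩
  rw [jxt, jxt, hset]
  exact ((OrderIso.addRight p).map_csInf' h hbdd).symm

lemma rfun_add_intCast (hi : ∃ i : ℤ, (i : ℝ) ≤ t ∧ n (tail (tshiftZ p x) i) ≠ 0)
    (hj : ∃ j : ℤ, t < (j : ℝ) ∧ n (tail (tshiftZ p x) j) ≠ 0) :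
    rfun n x (t + p) = rfun n (tshiftZ p x) t + mcoc n x p := by
  rw [rfun, rfun, ixt_add_intCast n x t p hi, jxt_add_intCast n x t p hj, ← tail_tshiftZ,
    add_comm (ixt n (tshiftZ p x) t) p, mcoc_add]
  push_cast
  ring

end

theorem stmt11_general {A : Type*}
    (X : Set (ℕ → A))
    (n : (ℕ → A) → ℕ)
    (hcof : ∀ x ∈ TwoSided X, ∀ i₀ : ℤ,
      (∃ i : ℤ, i < i₀ ∧ n (tail x i) ≠ 0) ∧ (∃ j : ℤ, i₀ < j ∧ n (tail x j) ≠ 0)) :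
    ∀ x ∈ TwoSided X, ∀ t : ℝ, ∀ p : ℤ,
      rfun n x (t + (p : ℝ)) = rfun n (tshiftZ p x) t + (mcoc n x p : ℝ) := by
  intro x hx t p
  have hcof' := hcof _ (tshiftZ_mem_twoSided hx p)
  obtain ⟨i, hi, hni⟩ := (hcof' (⌊t⌋ + 1)).1
  obtain ⟨j, hj, hnj⟩ := (hcof' ⌊t⌋).2
  exact rfun_add_intCast n x t p ⟨i, Int.le_floor.1 (Int.lt_add_one_iff.1 hi), hni⟩
    ⟨j, Int.floor_lt.1 hj, hnj⟩

/-- For all `x ∈ 𝐗`, `t ∈ ℝ`, `p ∈ ℤ`: `r_x(t + p) = r_{τ^p(x)}(t) + m_x(p)`. -/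
theorem stmt11 {A : Type*} [Fintype A] [TopologicalSpace A] [DiscreteTopology A]
    (X : Set (ℕ → A)) (hcl : IsClosed X) (hinv : shift '' X = X)
    (n : (ℕ → A) → ℕ)
    (hcof : ∀ x ∈ TwoSided X, ∀ i₀ : ℤ,
      (∃ i : ℤ, i < i₀ ∧ n (tail x i) ≠ 0) ∧ (∃ j : ℤ, i₀ < j ∧ n (tail x j) ≠ 0)) :
    ∀ x ∈ TwoSided X, ∀ t : ℝ, ∀ p : ℤ,
      rfun n x (t + (p : ℝ)) = rfun n (tshiftZ p x) t + (mcoc n x p : ℝ) :=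
  stmt11_general X n hcof
end

section
/- Let X be a one-sided shift of finite type, f ∈ C(X, ℕ), and X^f the one-sided shift space obtained as the image of the embedding ι_{X_f} of the tower X_f over X into (a × 𝒩)^ℕ₀. Then the groupoid 𝒢_{X^f} is isomorphic (as a topological groupoid) to (𝒢_X)_f := {(η, i, j) ∈ 𝒢_X × ℕ₀ × ℕ₀ : 0 ≤ i < f(r(η)), 0 ≤ j < f(s(η))}, via the map sending ((x, l − k, y), i, j) (where σ^l(x) = σ^k(y)) to (ι_{X_f}(x, i), i − j + Σ_{h=1}^{l} f(σ^h(x)) − Σ_{h=1}^{k} f(σ^h(y)), ι_{X_f}(y, j)). -/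
/-- A finite word appears in the shift space `X`. -/
def Appears {A : Type*} (X : Set (ℕ → A)) (w : List A) : Prop :=
  ∃ x ∈ X, ∀ i : Fin w.length, x i.val = w.get i

/-- `X` is a shift of finite type. -/
def IsSFT {A : Type*} (X : Set (ℕ → A)) : Prop :=
  ∃ m : ℕ, 0 < m ∧ ∀ u v w : List A, v.length = m →
    Appears X (u ++ v) → Appears X (v ++ w) → Appears X (u ++ v ++ w)

/-- The Deaconu–Renault groupoid `𝒢_X` of a one-sided shift space. -/
def GX {A : Type*} (X : Set (ℕ → A)) : Set ((ℕ → A) × ℤ × (ℕ → A)) :=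
  {g | g.1 ∈ X ∧ g.2.2 ∈ X ∧
    ∃ i j : ℕ, g.2.1 = (i : ℤ) - (j : ℤ) ∧ shift^[i] g.1 = shift^[j] g.2.2}

/-- The basic sets generating the étale topology of `𝒢_X`. -/
def IsBasicG {A : Type*} [TopologicalSpace A] (S : Set ((ℕ → A) × ℤ × (ℕ → A))) : Prop :=
  ∃ (i j : ℕ) (U U' : Set (ℕ → A)), IsOpen U ∧ IsOpen U' ∧
    S = {g | g.1 ∈ U ∧ g.2.2 ∈ U' ∧ g.2.1 = (i : ℤ) - (j : ℤ) ∧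
      shift^[i] g.1 = shift^[j] g.2.2}

/-- The tower `X_f` over `X`. -/
def XfSet {A : Type*} (X : Set (ℕ → A)) (f : (ℕ → A) → ℕ) : Set ((ℕ → A) × ℕ) :=
  {p | p.1 ∈ X ∧ p.2 < f p.1}

/-- The tower map `σ_{X_f}`. -/
def sigmaf {A : Type*} (f : (ℕ → A) → ℕ) (p : (ℕ → A) × ℕ) : (ℕ → A) × ℕ :=
  if p.2 = 0 then (shift p.1, f (shift p.1) - 1) else (p.1, p.2 - 1)

/-- The itinerary embedding `ι_{X_f} : X_f → (A × ℕ)^{ℕ₀}`. -/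
def iotaf {A : Type*} (f : (ℕ → A) → ℕ) (p : (ℕ → A) × ℕ) : ℕ → A × ℕ :=
  fun t => (((sigmaf f)^[t] p).1 0, ((sigmaf f)^[t] p).2)

/-- The subshift `X^f = ι_{X_f}(X_f)`. -/
def Xup {A : Type*} (X : Set (ℕ → A)) (f : (ℕ → A) → ℕ) : Set (ℕ → A × ℕ) :=
  iotaf f '' XfSet X f

/-- The blown-up groupoid `(𝒢_X)_f`. -/
def GXfSet {A : Type*} (X : Set (ℕ → A)) (f : (ℕ → A) → ℕ) :
    Set (((ℕ → A) × ℤ × (ℕ → A)) × ℕ × ℕ) :=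
  {q | q.1 ∈ GX X ∧ q.2.1 < f q.1.1 ∧ q.2.2 < f q.1.2.2}

/-- The basic sets generating the topology of `(𝒢_X)_f` (products of basic sets
of `𝒢_X` with singletons in `ℕ × ℕ`). -/
def IsBasicGF {A : Type*} [TopologicalSpace A]
    (T : Set (((ℕ → A) × ℤ × (ℕ → A)) × ℕ × ℕ)) : Prop :=
  ∃ (S : Set ((ℕ → A) × ℤ × (ℕ → A))) (i j : ℕ), IsBasicG S ∧
    T = {q | q.1 ∈ S ∧ q.2.1 = i ∧ q.2.2 = j}


section Helpers
variable {A : Type*}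

/-- cumulative weight `Σ_{h=1}^{l} f(σ^h x)` -/
def cwN (f : (ℕ → A) → ℕ) (x : ℕ → A) (l : ℕ) : ℕ :=
  ∑ h ∈ Finset.range l, f (shift^[h + 1] x)

lemma shift_iter (x : ℕ → A) (m : ℕ) : ∀ n, shift^[m] x n = x (n + m) := by
  induction m with
  | zero => intro n; rfl
  | succ m ih =>
    intro n
    rw [Function.iterate_succ_apply']
    show shift^[m] x (n + 1) = x (n + (m + 1))
    rw [ih]; congr 1; omega

lemma sigmaf_zero (f : (ℕ → A) → ℕ) (x : ℕ → A) :
    sigmaf f (x, 0) = (shift x, f (shift x) - 1) := by simp [sigmaf]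

lemma sigmaf_succ (f : (ℕ → A) → ℕ) (x : ℕ → A) (r : ℕ) :
    sigmaf f (x, r + 1) = (x, r) := by simp [sigmaf]

lemma descend (f : (ℕ → A) → ℕ) (x : ℕ → A) (i : ℕ) :
    (sigmaf f)^[i] (x, i) = (x, 0) := by
  induction i with
  | zero => rfl
  | succ i ih => rw [Function.iterate_succ_apply, sigmaf_succ, ih]

lemma block (f : (ℕ → A) → ℕ) (x : ℕ → A) (h : 0 < f (shift x)) :
    (sigmaf f)^[f (shift x)] (x, 0) = (shift x, 0) := by
  obtain ⟨m, hm⟩ : ∃ m, f (shift x) = m + 1 := ⟨f (shift x) - 1, by omega⟩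
  rw [hm, Function.iterate_succ_apply, sigmaf_zero, hm]
  simpa using descend f (shift x) m

lemma cwN_succ (f : (ℕ → A) → ℕ) (x : ℕ → A) (l : ℕ) :
    cwN f x (l + 1) = cwN f x l + f (shift^[l + 1] x) := Finset.sum_range_succ _ _

lemma orbit (f : (ℕ → A) → ℕ) (x : ℕ → A) (hp : ∀ h, 0 < f (shift^[h] x))
    (i l : ℕ) : (sigmaf f)^[i + cwN f x l] (x, i) = (shift^[l] x, 0) := by
  induction l with
  | zero => simpa [cwN] using descend f x i
  | succ l ih =>
    have h1 : i + cwN f x (l + 1) = f (shift^[l + 1] x) + (i + cwN f x l) := by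
      rw [cwN_succ]; omega
    rw [h1, Function.iterate_add_apply, ih]
    have hx : shift^[l + 1] x = shift (shift^[l] x) := Function.iterate_succ_apply' _ _ _
    rw [hx]
    exact block f _ (by rw [← hx]; exact hp (l + 1))

lemma shift_iotaf (f : (ℕ → A) → ℕ) (p : (ℕ → A) × ℕ) (m : ℕ) :
    shift^[m] (iotaf f p) = iotaf f ((sigmaf f)^[m] p) := by
  funext t
  rw [shift_iter]
  simp only [iotaf, ← Function.iterate_add_apply]

lemma cwN_congr {f : (ℕ → A) → ℕ} {x x' : ℕ → A} {l : ℕ}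
    (h : ∀ hh, 1 ≤ hh → hh ≤ l → f (shift^[hh] x') = f (shift^[hh] x)) :
    cwN f x' l = cwN f x l := by
  refine Finset.sum_congr rfl fun m hm => ?_
  exact h (m + 1) (by omega) (by have := Finset.mem_range.mp hm; omega)

lemma cwN_strictMono (f : (ℕ → A) → ℕ) (x : ℕ → A) (hp : ∀ h, 0 < f (shift^[h] x)) :
    StrictMono (cwN f x) :=
  strictMono_nat_of_lt_succ fun n => by rw [cwN_succ]; have := hp (n + 1); omega

lemma ext_term {f : (ℕ → A) → ℕ} {x y : ℕ → A} {l k : ℕ}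
    (hsh : shift^[l] x = shift^[k] y) (h : ℕ) :
    f (shift^[l + h + 1] x) = f (shift^[k + h + 1] y) := by
  rw [show l + h + 1 = (h + 1) + l from by omega, Function.iterate_add_apply, hsh,
    ← Function.iterate_add_apply, show h + 1 + k = k + h + 1 from by omega]

lemma cwN_add (f : (ℕ → A) → ℕ) (x : ℕ → A) (l d : ℕ) :
    cwN f x (l + d) = cwN f x l + ∑ h ∈ Finset.range d, f (shift^[l + h + 1] x) := by
  induction d with
  | zero => simp
  | succ d ih =>
    rw [show l + (d + 1) = (l + d) + 1 from by omega, cwN_succ, ih, Finset.sum_range_succ]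
    rw [show l + d + 1 = l + d + 1 from rfl]; omega

lemma ext_diff {f : (ℕ → A) → ℕ} {x y : ℕ → A} {l k : ℕ}
    (hsh : shift^[l] x = shift^[k] y) (d : ℕ) :
    (cwN f x (l + d) : ℤ) - cwN f y (k + d) = (cwN f x l : ℤ) - cwN f y k := by
  have h1 := cwN_add f x l d
  have h2 := cwN_add f y k d
  have h3 : ∑ h ∈ Finset.range d, f (shift^[l + h + 1] x)
      = ∑ h ∈ Finset.range d, f (shift^[k + h + 1] y) :=
    Finset.sum_congr rfl fun h _ => ext_term hsh h
  rw [h3] at h1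
  omega

lemma welldef {f : (ℕ → A) → ℕ} {x y : ℕ → A} {l k l' k' : ℕ}
    (hn : (l : ℤ) - k = (l' : ℤ) - k')
    (h1 : shift^[l] x = shift^[k] y) (h2 : shift^[l'] x = shift^[k'] y) :
    (cwN f x l : ℤ) - cwN f y k = (cwN f x l' : ℤ) - cwN f y k' := by
  rcases le_total l l' with h | h
  · obtain ⟨d, rfl⟩ : ∃ d, l' = l + d := ⟨l' - l, by omega⟩
    obtain ⟨rfl⟩ : k' = k + d := by omega
    exact (ext_diff h1 d).symm
  · obtain ⟨d, rfl⟩ : ∃ d, l = l' + d := ⟨l - l', by omega⟩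
    obtain ⟨rfl⟩ : k = k' + d := by omega
    exact ext_diff h2 d

lemma diff_det {f : (ℕ → A) → ℕ} {x y : ℕ → A} {l k l' k' : ℕ}
    (hpy : ∀ h, 0 < f (shift^[h] y))
    (h1 : shift^[l] x = shift^[k] y) (h2 : shift^[l'] x = shift^[k'] y)
    (he : (cwN f x l : ℤ) - cwN f y k = (cwN f x l' : ℤ) - cwN f y k') :
    (l : ℤ) - k = (l' : ℤ) - k' := by
  have e1 := ext_diff (f := f) h1 l'
  have e2 := ext_diff (f := f) h2 l
  rw [show l' + l = l + l' from by omega] at e2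
  have hy : cwN f y (k + l') = cwN f y (k' + l) := by omega
  have := (cwN_strictMono f y hpy).injective hy
  omega

/-- address function: position in the tower after `t` steps, computed from `f` along `x`. -/
def addr (f : (ℕ → A) → ℕ) (x : ℕ → A) (i : ℕ) : ℕ → ℕ × ℕ
  | 0 => (0, i)
  | t + 1 =>
    let p := addr f x i t
    if p.2 = 0 then (p.1 + 1, f (shift^[p.1 + 1] x) - 1) else (p.1, p.2 - 1)

lemma addr_le (f : (ℕ → A) → ℕ) (x : ℕ → A) (i : ℕ) : ∀ t, (addr f x i t).1 ≤ t := by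
  intro t
  induction t with
  | zero => simp [addr]
  | succ t ih => rw [addr]; split <;> simp <;> omega

lemma addr_spec (f : (ℕ → A) → ℕ) (x x' : ℕ → A) (i : ℕ) :
    ∀ t, (∀ h, h ≤ t → f (shift^[h] x') = f (shift^[h] x)) →
    (sigmaf f)^[t] (x', i) = (shift^[(addr f x i t).1] x', (addr f x i t).2) := by
  intro t
  induction t with
  | zero => intro _; simp [addr]
  | succ t ih =>
    intro hag
    rw [Function.iterate_succ_apply', ih (fun h hh => hag h (by omega))]
    have hle := addr_le f x i t
    by_cases h0 : (addr f x i t).2 = 0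
    · have he : addr f x i (t + 1)
          = ((addr f x i t).1 + 1, f (shift^[(addr f x i t).1 + 1] x) - 1) := by
        rw [addr]; simp [h0]
      rw [h0, sigmaf_zero, he]
      have h2 : shift (shift^[(addr f x i t).1] x') = shift^[(addr f x i t).1 + 1] x' :=
        (Function.iterate_succ_apply' _ _ _).symm
      rw [h2, hag ((addr f x i t).1 + 1) (by omega)]
    · obtain ⟨s, hs⟩ : ∃ s, (addr f x i t).2 = s + 1 := ⟨(addr f x i t).2 - 1, by omega⟩
      have he : addr f x i (t + 1) = ((addr f x i t).1, s) := by
        rw [addr]; simp [hs]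
      rw [hs, sigmaf_succ, he]

lemma addr_form (f : (ℕ → A) → ℕ) (x : ℕ → A) (i t : ℕ) :
    (sigmaf f)^[t] (x, i) = (shift^[(addr f x i t).1] x, (addr f x i t).2) :=
  addr_spec f x x i t (fun _ _ => rfl)

lemma addr_sum (f : (ℕ → A) → ℕ) (x : ℕ → A) (i : ℕ)
    (hp : ∀ h, 0 < f (shift^[h] x)) :
    ∀ t : ℕ, (t : ℤ) = (i : ℤ) - ((addr f x i t).2 : ℤ) + (cwN f x (addr f x i t).1 : ℤ) := by
  intro t
  induction t with
  | zero => simp [addr, cwN]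
  | succ t ih =>
    by_cases h0 : (addr f x i t).2 = 0
    · have he : addr f x i (t + 1)
          = ((addr f x i t).1 + 1, f (shift^[(addr f x i t).1 + 1] x) - 1) := by
        rw [addr]; simp [h0]
      rw [he]
      have hc := cwN_succ f x (addr f x i t).1
      have hpos := hp ((addr f x i t).1 + 1)
      rw [h0] at ih
      simp only []
      push_cast
      omega
    · obtain ⟨s, hs⟩ : ∃ s, (addr f x i t).2 = s + 1 := ⟨(addr f x i t).2 - 1, by omega⟩
      have he : addr f x i (t + 1) = ((addr f x i t).1, s) := by
        rw [addr]; simp [hs]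
      rw [he]
      rw [hs] at ih
      push_cast at ih ⊢
      omega

lemma recover (f : (ℕ → A) → ℕ) (x x' : ℕ → A) (i N : ℕ)
    (hpx : ∀ h, 0 < f (shift^[h] x)) (hpx' : ∀ h, 0 < f (shift^[h] x'))
    (hag : ∀ t, t < N → iotaf f (x', i) t = iotaf f (x, i) t) :
    ∀ m, i + cwN f x m < N →
      (∀ r, r ≤ m → x' r = x r) ∧
      (∀ h, 1 ≤ h → h ≤ m → f (shift^[h] x') = f (shift^[h] x)) := by
  intro m
  induction m with
  | zero =>
    intro hN
    refine ⟨fun r hr => ?_, by omega⟩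
    have h0 : (0 : ℕ) < N := by simp [cwN] at hN; omega
    have := hag 0 h0
    simp only [iotaf, Function.iterate_zero, id_eq] at this
    have hr0 : r = 0 := by omega
    rw [hr0]
    exact (Prod.mk.injEq _ _ _ _).mp this |>.1
  | succ m ih =>
    intro hN
    have hcs := cwN_succ f x m
    have hpm := hpx (m + 1)
    have hlt : i + cwN f x m < N := by omega
    obtain ⟨hr, hf'⟩ := ih hlt
    have hcw : cwN f x' m = cwN f x m := cwN_congr hf'
    have o1 : (sigmaf f)^[i + cwN f x m] (x, i) = (shift^[m] x, 0) := orbit f x hpx i m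
    have o2 : (sigmaf f)^[i + cwN f x m] (x', i) = (shift^[m] x', 0) := by
      rw [show i + cwN f x m = i + cwN f x' m from by rw [hcw]]
      exact orbit f x' hpx' i m
    have hT1 : i + cwN f x m + 1 < N := by omega
    have key := hag (i + cwN f x m + 1) hT1
    have c1 : (sigmaf f)^[i + cwN f x m + 1] (x, i)
        = (shift^[m + 1] x, f (shift^[m + 1] x) - 1) := by
      rw [Function.iterate_succ_apply', o1, sigmaf_zero,
        ← Function.iterate_succ_apply' shift]
    have c2 : (sigmaf f)^[i + cwN f x m + 1] (x', i)
        = (shift^[m + 1] x', f (shift^[m + 1] x') - 1) := by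
      rw [Function.iterate_succ_apply', o2, sigmaf_zero,
        ← Function.iterate_succ_apply' shift]
    rw [iotaf, iotaf, c1, c2] at key
    simp only [Prod.mk.injEq] at key
    obtain ⟨k1, k2⟩ := key
    rw [shift_iter, shift_iter] at k1
    have hfm : f (shift^[m + 1] x') = f (shift^[m + 1] x) := by
      have := hpx' (m + 1); omega
    constructor
    · intro r hrle
      rcases Nat.lt_or_ge r (m + 1) with h | h
      · exact hr r (by omega)
      · have : r = m + 1 := by omega
        rw [this]
        simpa using k1
    · intro h h1 h2
      rcases Nat.lt_or_ge h (m + 1) with hh | hh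
      · exact hf' h h1 (by omega)
      · have : h = m + 1 := by omega
        rw [this]; exact hfm

lemma iota_inj (f : (ℕ → A) → ℕ) (x x' : ℕ → A) (i i' : ℕ)
    (hpx : ∀ h, 0 < f (shift^[h] x)) (hpx' : ∀ h, 0 < f (shift^[h] x'))
    (h : iotaf f (x, i) = iotaf f (x', i')) : x = x' ∧ i = i' := by
  have h0 := congrFun h 0
  simp only [iotaf, Function.iterate_zero, id_eq, Prod.mk.injEq] at h0
  have hi : i = i' := h0.2
  subst hi
  refine ⟨funext fun m => ?_, rfl⟩
  have := recover f x x' i (i + cwN f x m + 1) hpx hpx'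
    (fun t _ => (congrFun h t).symm) m (by omega)
  exact (this.1 m le_rfl).symm

section Topo
variable {B : Type*} [TopologicalSpace B] [DiscreteTopology B]

lemma cyl_open (z : ℕ → B) (N : ℕ) : IsOpen {z' : ℕ → B | ∀ t, t < N → z' t = z t} := by
  have : {z' : ℕ → B | ∀ t, t < N → z' t = z t}
      = ⋂ t ∈ Finset.range N, (fun w : ℕ → B => w t) ⁻¹' {z t} := by
    ext w; simp [Finset.mem_range]
  rw [this]
  exact isOpen_biInter_finset fun t _ =>
    (continuous_apply t).isOpen_preimage _ (isOpen_discrete _)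

lemma open_cyl {U : Set (ℕ → B)} (hU : IsOpen U) (z : ℕ → B) (hz : z ∈ U) :
    ∃ N, ∀ z', (∀ t, t < N → z' t = z t) → z' ∈ U := by
  obtain ⟨I, u, h1, h2⟩ := isOpen_pi_iff.mp hU z hz
  refine ⟨I.sup id + 1, fun z' hz' => h2 ?_⟩
  intro a ha
  have hle : a ≤ I.sup id := Finset.le_sup (f := id) ha
  rw [hz' a (by omega)]
  exact (h1 a ha).2

end Topo

lemma loc_const {B : Type*} [TopologicalSpace B] {X : Set B} {f : B → ℕ}
    (hf : ContinuousOn f X) {w : B} (hw : w ∈ X) :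
    ∃ W, IsOpen W ∧ w ∈ W ∧ ∀ v ∈ W ∩ X, f v = f w := by
  have h1 : f ⁻¹' {f w} ∈ nhdsWithin w X :=
    hf w hw ((isOpen_discrete ({f w} : Set ℕ)).mem_nhds rfl)
  obtain ⟨W, hWo, hWm, hWs⟩ := mem_nhdsWithin.mp h1
  exact ⟨W, hWo, hWm, fun v hv => hWs hv⟩

lemma continuous_shift [TopologicalSpace A] : Continuous (shift : (ℕ → A) → (ℕ → A)) :=
  continuous_pi fun n => continuous_apply (n + 1)

open Classical in
noncomputable def ThetaMid (f : (ℕ → A) → ℕ) (x y : ℕ → A) (n : ℤ) : ℤ :=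
  if h : ∃ lk : ℕ × ℕ, n = (lk.1 : ℤ) - (lk.2 : ℤ) ∧ shift^[lk.1] x = shift^[lk.2] y
  then (cwN f x h.choose.1 : ℤ) - (cwN f y h.choose.2 : ℤ) else 0

noncomputable def Theta (f : (ℕ → A) → ℕ) (q : ((ℕ → A) × ℤ × (ℕ → A)) × ℕ × ℕ) :
    (ℕ → A × ℕ) × ℤ × (ℕ → A × ℕ) :=
  (iotaf f (q.1.1, q.2.1),
   (q.2.1 : ℤ) - (q.2.2 : ℤ) + ThetaMid f q.1.1 q.1.2.2 q.1.2.1,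
   iotaf f (q.1.2.2, q.2.2))

lemma ThetaMid_eq (f : (ℕ → A) → ℕ) {x y : ℕ → A} {n : ℤ} {l k : ℕ}
    (hn : n = (l : ℤ) - (k : ℤ)) (hsh : shift^[l] x = shift^[k] y) :
    ThetaMid f x y n = (cwN f x l : ℤ) - (cwN f y k : ℤ) := by
  have hex : ∃ lk : ℕ × ℕ, n = (lk.1 : ℤ) - (lk.2 : ℤ) ∧ shift^[lk.1] x = shift^[lk.2] y :=
    ⟨(l, k), hn, hsh⟩
  rw [ThetaMid]
  rw [dif_pos hex]
  obtain ⟨h1, h2⟩ := hex.choose_spec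
  exact welldef (by rw [← h1, ← hn]) h2 hsh

end Helpers


/-- The groupoid `𝒢_{X^f}` of the subshift `X^f` is isomorphic, as a
topological groupoid, to `(𝒢_X)_f`, via
`((x, l - k, y), i, j) ↦ (ι(x,i), i - j + Σ_{h=1}^l f(σ^h x) - Σ_{h=1}^k f(σ^h y), ι(y,j))`. -/
theorem stmt18 {A : Type*} [Fintype A] [TopologicalSpace A] [DiscreteTopology A]
    (X : Set (ℕ → A)) (hcl : IsClosed X) (hinv : shift '' X = X) (hsft : IsSFT X)
    (f : (ℕ → A) → ℕ) (hf : ContinuousOn f X) (hfpos : ∀ x ∈ X, 0 < f x) :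
    ∃ Θ : (((ℕ → A) × ℤ × (ℕ → A)) × ℕ × ℕ) → ((ℕ → A × ℕ) × ℤ × (ℕ → A × ℕ)),
      -- the explicit formula
      (∀ (x y : ℕ → A) (l k i j : ℕ),
        ((x, (l : ℤ) - (k : ℤ), y), (i, j)) ∈ GXfSet X f →
        shift^[l] x = shift^[k] y →
        Θ ((x, (l : ℤ) - (k : ℤ), y), (i, j)) =
          (iotaf f (x, i),
           (i : ℤ) - (j : ℤ) + ∑ h ∈ Finset.range l, (f (shift^[h + 1] x) : ℤ)
             - ∑ h ∈ Finset.range k, (f (shift^[h + 1] y) : ℤ),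
           iotaf f (y, j))) ∧
      -- bijection onto 𝒢_{X^f}
      Set.BijOn Θ (GXfSet X f) (GX (Xup X f)) ∧
      -- multiplicativity on composable pairs
      (∀ q q', q ∈ GXfSet X f → q' ∈ GXfSet X f →
        q.1.2.2 = q'.1.1 → q.2.2 = q'.2.1 →
        Θ ((q.1.1, q.1.2.1 + q'.1.2.1, q'.1.2.2), (q.2.1, q'.2.2)) =
          ((Θ q).1, (Θ q).2.1 + (Θ q').2.1, (Θ q').2.2)) ∧
      -- compatibility with inversion
      (∀ q ∈ GXfSet X f,
        Θ ((q.1.2.2, -q.1.2.1, q.1.1), (q.2.2, q.2.1)) =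
          ((Θ q).2.2, -(Θ q).2.1, (Θ q).1)) ∧
      -- continuity of Θ
      (∀ q ∈ GXfSet X f, ∀ T, IsBasicG T → Θ q ∈ T →
        ∃ S, IsBasicGF S ∧ q ∈ S ∧ ∀ q' ∈ S ∩ GXfSet X f, Θ q' ∈ T) ∧
      -- continuity of the inverse (openness of Θ)
      (∀ q ∈ GXfSet X f, ∀ S, IsBasicGF S → q ∈ S →
        ∃ T, IsBasicG T ∧ Θ q ∈ T ∧
          ∀ q' ∈ GXfSet X f, Θ q' ∈ T → q' ∈ S) := by
  classical
  have hmemX : ∀ x ∈ X, ∀ h : ℕ, shift^[h] x ∈ X := by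
    intro x hx h
    induction h with
    | zero => exact hx
    | succ h ih =>
      rw [Function.iterate_succ_apply']
      rw [← hinv]
      exact ⟨_, ih, rfl⟩
  have hpos : ∀ x ∈ X, ∀ h : ℕ, 0 < f (shift^[h] x) :=
    fun x hx h => hfpos _ (hmemX x hx h)
  have hpos_it : ∀ (x : ℕ → A), (∀ h : ℕ, 0 < f (shift^[h] x)) → ∀ l : ℕ,
      ∀ h : ℕ, 0 < f (shift^[h] (shift^[l] x)) := by
    intro x hx l h
    rw [← Function.iterate_add_apply]
    exact hx (h + l)
  refine ⟨Theta f, ?_, ⟨?_, ?_, ?_⟩, ?_, ?_, ?_, ?_⟩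
  · -- formula
    intro x y l k i j _ hsh
    simp only [Theta]
    rw [ThetaMid_eq f rfl hsh]
    have hm : (i : ℤ) - (j : ℤ) + ((cwN f x l : ℤ) - (cwN f y k : ℤ))
        = (i : ℤ) - (j : ℤ) + ∑ h ∈ Finset.range l, (f (shift^[h + 1] x) : ℤ)
          - ∑ h ∈ Finset.range k, (f (shift^[h + 1] y) : ℤ) := by
      push_cast [cwN]; ring
    rw [hm]
  · -- MapsTo
    intro q hq
    obtain ⟨⟨x, n, y⟩, i, j⟩ := q
    simp only [GXfSet, GX, Set.mem_setOf_eq] at hq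
    obtain ⟨⟨hx, hy, l, k, hn, hsh⟩, hi, hj⟩ := hq
    simp only [GX, Xup, Set.mem_setOf_eq, Theta]
    refine ⟨⟨(x, i), ⟨hx, hi⟩, rfl⟩, ⟨(y, j), ⟨hy, hj⟩, rfl⟩,
      i + cwN f x l, j + cwN f y k, ?_, ?_⟩
    · rw [ThetaMid_eq f hn hsh]
      push_cast
      ring
    · rw [shift_iotaf, shift_iotaf, orbit f x (hpos x hx) i l, orbit f y (hpos y hy) j k, hsh]
  · -- InjOn
    intro q hq q' hq' heq
    obtain ⟨⟨x, n, y⟩, i, j⟩ := q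
    obtain ⟨⟨x', n', y'⟩, i', j'⟩ := q'
    simp only [GXfSet, GX, Set.mem_setOf_eq] at hq hq'
    obtain ⟨⟨hx, hy, l, k, hn, hsh⟩, hi, hj⟩ := hq
    obtain ⟨⟨hx', hy', l', k', hn', hsh'⟩, hi', hj'⟩ := hq'
    simp only [Theta, Prod.mk.injEq] at heq
    obtain ⟨e1, e2, e3⟩ := heq
    obtain ⟨rfl, rfl⟩ := iota_inj f x x' i i' (hpos x hx) (hpos x' hx') e1
    obtain ⟨rfl, rfl⟩ := iota_inj f y y' j j' (hpos y hy) (hpos y' hy') e3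
    rw [ThetaMid_eq f hn hsh, ThetaMid_eq f hn' hsh'] at e2
    have hd : (l : ℤ) - k = (l' : ℤ) - k' :=
      diff_det (hpos y hy) hsh hsh' (by omega)
    have hnn : n = n' := by rw [hn, hn']; exact hd
    rw [hnn]
  · -- SurjOn
    intro g hg
    simp only [GX, Xup, Set.mem_setOf_eq] at hg
    obtain ⟨hz, hw, I, J, hm, hsh⟩ := hg
    obtain ⟨⟨x, a⟩, ⟨hx, ha⟩, hze⟩ := hz
    obtain ⟨⟨y, b⟩, ⟨hy, hb⟩, hwe⟩ := hw
    have hsh' : iotaf f ((sigmaf f)^[I] (x, a)) = iotaf f ((sigmaf f)^[J] (y, b)) := by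
      rw [← shift_iotaf, ← shift_iotaf, hze, hwe]; exact hsh
    rw [addr_form f x a I, addr_form f y b J] at hsh'
    obtain ⟨hxy, hr⟩ := iota_inj f _ _ _ _ (hpos_it x (hpos x hx) _) (hpos_it y (hpos y hy) _) hsh'
    have s1 := addr_sum f x a (hpos x hx) I
    have s2 := addr_sum f y b (hpos y hy) J
    refine ⟨((x, ((addr f x a I).1 : ℤ) - ((addr f y b J).1 : ℤ), y), (a, b)),
      ⟨⟨hx, hy, (addr f x a I).1, (addr f y b J).1, rfl, hxy⟩, ha, hb⟩, ?_⟩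
    simp only [Theta]
    have hmid : (a : ℤ) - b + ThetaMid f x y (((addr f x a I).1 : ℤ) - ((addr f y b J).1 : ℤ))
        = g.2.1 := by
      rw [ThetaMid_eq f rfl hxy, hm]
      omega
    rw [hmid, hze, hwe]
  · -- multiplicativity
    intro q q' hq hq' h12 h22
    obtain ⟨⟨x, n, y⟩, i, j⟩ := q
    obtain ⟨⟨x2, n2, y2⟩, i2, j2⟩ := q'
    simp only [GXfSet, GX, Set.mem_setOf_eq] at hq hq'
    dsimp only at h12 h22 ⊢
    obtain rfl := h12
    obtain rfl := h22
    obtain ⟨⟨hx, hy, l, k, hn, hsh⟩, hi, hj⟩ := hq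
    obtain ⟨⟨hx2, hy2, l', k', hn', hsh'⟩, hi2, hj2⟩ := hq'
    have hcomp : shift^[l + l'] x = shift^[k + k'] y2 := by
      rw [show l + l' = l' + l from by omega, Function.iterate_add_apply, hsh,
        ← Function.iterate_add_apply, show l' + k = k + l' from by omega,
        Function.iterate_add_apply, hsh', ← Function.iterate_add_apply]
    simp only [Theta]
    rw [ThetaMid_eq f (l := l + l') (k := k + k') (by rw [hn, hn']; push_cast; ring) hcomp,
      ThetaMid_eq f hn hsh, ThetaMid_eq f hn' hsh']
    have e1 := ext_diff (f := f) hsh l'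
    have e2 := ext_diff (f := f) hsh' k
    rw [show l' + k = k + l' from by omega, show k' + k = k + k' from by omega] at e2
    have hmid : (i : ℤ) - j2 + ((cwN f x (l + l') : ℤ) - (cwN f y2 (k + k') : ℤ))
        = (i : ℤ) - j + ((cwN f x l : ℤ) - (cwN f y k : ℤ))
          + ((j : ℤ) - j2 + ((cwN f y l' : ℤ) - (cwN f y2 k' : ℤ))) := by omega
    rw [hmid]
  · -- inversion
    intro q hq
    obtain ⟨⟨x, n, y⟩, i, j⟩ := q
    simp only [GXfSet, GX, Set.mem_setOf_eq] at hq
    obtain ⟨⟨hx, hy, l, k, hn, hsh⟩, hi, hj⟩ := hq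
    simp only [Theta]
    rw [ThetaMid_eq f (n := -n) (l := k) (k := l) (by rw [hn]; ring) hsh.symm,
      ThetaMid_eq f hn hsh]
    have hmid : (j : ℤ) - i + ((cwN f y k : ℤ) - (cwN f x l : ℤ))
        = -((i : ℤ) - j + ((cwN f x l : ℤ) - (cwN f y k : ℤ))) := by ring
    rw [hmid]
  · -- continuity of Θ
    intro q hq T hT hqT
    obtain ⟨⟨x, n, y⟩, i, j⟩ := q
    simp only [GXfSet, GX, Set.mem_setOf_eq] at hq
    obtain ⟨⟨hx, hy, l, k, hn, hsh⟩, hi, hj⟩ := hq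
    obtain ⟨I, J, U, U', hUo, hU'o, rfl⟩ := hT
    simp only [Set.mem_setOf_eq, Theta] at hqT
    obtain ⟨hzU, hwU, hmid, hshz⟩ := hqT
    have hpx := hpos x hx
    have hpy := hpos y hy
    have hshz' : iotaf f (shift^[(addr f x i I).1] x, (addr f x i I).2)
        = iotaf f (shift^[(addr f y j J).1] y, (addr f y j J).2) := by
      rw [← addr_form, ← addr_form, ← shift_iotaf, ← shift_iotaf]; exact hshz
    obtain ⟨hxy1, hre⟩ := iota_inj f _ _ _ _ (hpos_it x hpx _) (hpos_it y hpy _) hshz'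
    have s1 := addr_sum f x i hpx I
    have s2 := addr_sum f y j hpy J
    rw [ThetaMid_eq f hn hsh] at hmid
    have hC : (cwN f x l : ℤ) - cwN f y k
        = (cwN f x (addr f x i I).1 : ℤ) - cwN f y (addr f y j J).1 := by omega
    have hn1 : n = ((addr f x i I).1 : ℤ) - ((addr f y j J).1 : ℤ) := by
      rw [hn]; exact diff_det hpy hsh hxy1 hC
    obtain ⟨NU, hNU⟩ := open_cyl hUo _ hzU
    obtain ⟨NU', hNU'⟩ := open_cyl hU'o _ hwU
    set N := I + J + NU + NU' with hN
    choose Wx hWxo hWxm hWxs using fun h : ℕ => loc_const hf (hmemX x hx h)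
    choose Wy hWyo hWym hWys using fun h : ℕ => loc_const hf (hmemX y hy h)
    set V : Set (ℕ → A) := {x' | ∀ t, t < N + 1 → x' t = x t}
      ∩ ⋂ h ∈ Finset.range (N + 1), shift^[h] ⁻¹' Wx h with hV
    set V' : Set (ℕ → A) := {y' | ∀ t, t < N + 1 → y' t = y t}
      ∩ ⋂ h ∈ Finset.range (N + 1), shift^[h] ⁻¹' Wy h with hV'
    have hVo : IsOpen V := (cyl_open x (N + 1)).inter
      (isOpen_biInter_finset fun h _ => (hWxo h).preimage (continuous_shift.iterate h))
    have hV'o : IsOpen V' := (cyl_open y (N + 1)).inter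
      (isOpen_biInter_finset fun h _ => (hWyo h).preimage (continuous_shift.iterate h))
    have hxV : x ∈ V := ⟨fun t _ => rfl, by
      simp only [Set.mem_iInter]
      intro h _
      exact hWxm h⟩
    have hyV : y ∈ V' := ⟨fun t _ => rfl, by
      simp only [Set.mem_iInter]
      intro h _
      exact hWym h⟩
    refine ⟨{p | (p.1.1 ∈ V ∧ p.1.2.2 ∈ V' ∧
        p.1.2.1 = ((addr f x i I).1 : ℤ) - ((addr f y j J).1 : ℤ) ∧
        shift^[(addr f x i I).1] p.1.1 = shift^[(addr f y j J).1] p.1.2.2) ∧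
        p.2.1 = i ∧ p.2.2 = j},
      ⟨_, i, j, ⟨(addr f x i I).1, (addr f y j J).1, V, V', hVo, hV'o, rfl⟩, rfl⟩,
      ⟨⟨hxV, hyV, hn1, hxy1⟩, rfl, rfl⟩, ?_⟩
    intro q'' hq''
    obtain ⟨⟨x', n2, y'⟩, i2, j2⟩ := q''
    obtain ⟨hS'', hG⟩ := hq''
    simp only [GXfSet, GX, Set.mem_setOf_eq] at hS'' hG
    obtain ⟨⟨hx'V, hy'V, hn'', hsh''⟩, hii, hjj⟩ := hS''
    obtain rfl := hii.symm
    obtain rfl := hjj.symm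
    obtain ⟨⟨hx', hy', -⟩, -, -⟩ := hG
    have hfagx : ∀ h : ℕ, h ≤ N → f (shift^[h] x') = f (shift^[h] x) := by
      intro h hh
      have hmem' : shift^[h] x' ∈ Wx h := by
        have h2 := hx'V.2
        simp only [Set.mem_iInter] at h2
        exact h2 h (Finset.mem_range.mpr (by omega))
      exact hWxs h _ ⟨hmem', hmemX x' hx' h⟩
    have hfagy : ∀ h : ℕ, h ≤ N → f (shift^[h] y') = f (shift^[h] y) := by
      intro h hh
      have hmem' : shift^[h] y' ∈ Wy h := by
        have h2 := hy'V.2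
        simp only [Set.mem_iInter] at h2
        exact h2 h (Finset.mem_range.mpr (by omega))
      exact hWys h _ ⟨hmem', hmemX y' hy' h⟩
    have hlx : ∀ t : ℕ, t ≤ N → x' t = x t := fun t ht => hx'V.1 t (by omega)
    have hly : ∀ t : ℕ, t ≤ N → y' t = y t := fun t ht => hy'V.1 t (by omega)
    have hiotax : ∀ t : ℕ, t ≤ N → iotaf f (x', i) t = iotaf f (x, i) t := by
      intro t ht
      have hax' := addr_spec f x x' i t (fun h hh => hfagx h (by omega))
      have hax := addr_form f x i t
      have hlet : x' ((addr f x i t).1) = x ((addr f x i t).1) :=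
        hlx _ (le_trans (addr_le f x i t) ht)
      simp [iotaf, hax', hax, shift_iter, hlet]
    have hiotay : ∀ t : ℕ, t ≤ N → iotaf f (y', j) t = iotaf f (y, j) t := by
      intro t ht
      have hay' := addr_spec f y y' j t (fun h hh => hfagy h (by omega))
      have hay := addr_form f y j t
      have hlet : y' ((addr f y j t).1) = y ((addr f y j t).1) :=
        hly _ (le_trans (addr_le f y j t) ht)
      simp [iotaf, hay', hay, shift_iter, hlet]
    have hcwx : cwN f x' (addr f x i I).1 = cwN f x (addr f x i I).1 :=
      cwN_congr fun h h1 h2 => hfagx h (by have := addr_le f x i I; omega)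
    have hcwy : cwN f y' (addr f y j J).1 = cwN f y (addr f y j J).1 :=
      cwN_congr fun h h1 h2 => hfagy h (by have := addr_le f y j J; omega)
    simp only [Theta, Set.mem_setOf_eq]
    refine ⟨hNU _ (fun t ht => hiotax t (by omega)), hNU' _ (fun t ht => hiotay t (by omega)),
      ?_, ?_⟩
    · rw [ThetaMid_eq f hn'' hsh'', hcwx, hcwy]
      omega
    · rw [shift_iotaf, shift_iotaf,
        addr_spec f x x' i I (fun h hh => hfagx h (by omega)),
        addr_spec f y y' j J (fun h hh => hfagy h (by omega)), hsh'', hre]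
  · -- continuity of the inverse
    intro q hq S hS hqS
    obtain ⟨⟨x, n, y⟩, i, j⟩ := q
    simp only [GXfSet, GX, Set.mem_setOf_eq] at hq
    obtain ⟨⟨hx, hy, -⟩, hi, hj⟩ := hq
    obtain ⟨S0, i0, j0, ⟨l, k, V, V', hVo, hV'o, rfl⟩, rfl⟩ := hS
    simp only [Set.mem_setOf_eq] at hqS
    obtain ⟨⟨hxV, hyV, hnq, hshq⟩, hi0, hj0⟩ := hqS
    obtain rfl := hi0
    obtain rfl := hj0
    have hpx := hpos x hx
    have hpy := hpos y hy
    obtain ⟨MV, hMV⟩ := open_cyl hVo x hxV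
    obtain ⟨MV', hMV'⟩ := open_cyl hV'o y hyV
    refine ⟨{g | (∀ t, t < i + cwN f x (MV + l) + 1 → g.1 t = iotaf f (x, i) t) ∧
        (∀ t, t < j + cwN f y (MV' + k) + 1 → g.2.2 t = iotaf f (y, j) t) ∧
        g.2.1 = ((i + cwN f x l : ℕ) : ℤ) - ((j + cwN f y k : ℕ) : ℤ) ∧
        shift^[i + cwN f x l] g.1 = shift^[j + cwN f y k] g.2.2},
      ⟨i + cwN f x l, j + cwN f y k,
        {z | ∀ t, t < i + cwN f x (MV + l) + 1 → z t = iotaf f (x, i) t},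
        {z | ∀ t, t < j + cwN f y (MV' + k) + 1 → z t = iotaf f (y, j) t},
        cyl_open _ _, cyl_open _ _, rfl⟩,
      ⟨fun t _ => rfl, fun t _ => rfl, ?_, ?_⟩, ?_⟩
    · show (i : ℤ) - j + ThetaMid f x y n = _
      rw [ThetaMid_eq f hnq hshq]
      push_cast
      ring
    · show shift^[i + cwN f x l] (iotaf f (x, i)) = shift^[j + cwN f y k] (iotaf f (y, j))
      rw [shift_iotaf, shift_iotaf, orbit f x hpx i l, orbit f y hpy j k, hshq]
    · intro q' hq' hq'T
      obtain ⟨⟨x', n', y'⟩, i', j'⟩ := q'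
      simp only [GXfSet, GX, Set.mem_setOf_eq] at hq'
      obtain ⟨⟨hx', hy', l2, k2, hn2, hsh2⟩, hi', hj'⟩ := hq'
      simp only [Theta, Set.mem_setOf_eq] at hq'T
      obtain ⟨hU1, hU2, hmid', hsh'⟩ := hq'T
      have hpx' := hpos x' hx'
      have hpy' := hpos y' hy'
      have h00 := hU1 0 (by omega)
      simp only [iotaf, Function.iterate_zero, id_eq, Prod.mk.injEq] at h00
      obtain ⟨-, h00i⟩ := h00
      obtain rfl := h00i.symm
      have h00' := hU2 0 (by omega)
      simp only [iotaf, Function.iterate_zero, id_eq, Prod.mk.injEq] at h00'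
      obtain ⟨-, h00j⟩ := h00'
      obtain rfl := h00j.symm
      obtain ⟨hrx, hfx⟩ := recover f x x' i _ hpx hpx' (fun t ht => hU1 t ht)
        (MV + l) (by omega)
      obtain ⟨hry, hfy⟩ := recover f y y' j _ hpy hpy' (fun t ht => hU2 t ht)
        (MV' + k) (by omega)
      have hx'V : x' ∈ V := hMV x' (fun t ht => hrx t (by omega))
      have hy'V : y' ∈ V' := hMV' y' (fun t ht => hry t (by omega))
      have hcwx : cwN f x' l = cwN f x l := cwN_congr fun h h1 h2 => hfx h h1 (by omega)
      have hcwy : cwN f y' k = cwN f y k := cwN_congr fun h h1 h2 => hfy h h1 (by omega)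
      rw [shift_iotaf, shift_iotaf,
        show i + cwN f x l = i + cwN f x' l from by rw [hcwx],
        show j + cwN f y k = j + cwN f y' k from by rw [hcwy],
        orbit f x' hpx' i l, orbit f y' hpy' j k] at hsh'
      obtain ⟨hxy', -⟩ := iota_inj f _ _ _ _ (hpos_it x' hpx' _) (hpos_it y' hpy' _) hsh'
      rw [ThetaMid_eq f hn2 hsh2] at hmid'
      have hd : (l2 : ℤ) - k2 = (l : ℤ) - k :=
        diff_det hpy' hsh2 hxy' (by omega)
      exact ⟨⟨hx'V, hy'V, by rw [hn2]; exact hd, hxy'⟩, rfl, rfl⟩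
end
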